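/- Work over the ring k[ε]/(ε³), where ε is a central variable with ε³ = 0. Let A ∈ 𝒜₂(k) and let f₁, f₂ ∈ k[x₁,x₂,p₁,p₂][[h]]. Set R := φ(A)·exp(ε·N(f₁ + ε·f₂)), where the exponential is the finite sum 1 + ε·N(f₁+εf₂) + (ε²/2)·N(f₁)². Then R is invertible and, modulo ε³, for j = 1, 2: R·x_j·R^{−1} = Σ_{i=1}^2 x_i·A_{ij} + ε·φ(A)·N(∂_{p_j} f₁ + ε·∂_{p_j} f₂)·φ(A)^{−1} + (ε²/2)·φ(A)·[N(f₁), N(∂_{p_j} f₁)]·φ(A)^{−1}, where [a,b] = ab − ba and ∂_{p_j} denotes the partial derivative in the commutative polynomial algebra. -/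

import Mathlib

/-!
Two commutator rules for normal-ordered polynomials, `[N q, x_j] = N (∂q/∂p_j)` and
`N (x_i q) = x_i N q`, carry the argument. Since `∂/∂p_j` is a derivation and the exponent
`M = Σ x_i (A - 𝟙)_{il} p_l` of `φ(A)` has no constant term, `∂_{p_j} exp M = (∂_{p_j} M) exp M`
with `∂_{p_j} M = Σ_i x_i (A - 𝟙)_{ij}`; hence `φ(A) x_j = (Σ_i x_i A_{ij}) φ(A)`.
For the second factor `E = 1 + ε F + (ε²/2) F₁²`, where `F₁ = N f₁` and `F = F₁ + ε N f₂`,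
`E - 1` is a multiple of the central nilpotent `ε`, so `E` is a unit, and a direct expansion modulo `ε³`
gives `E x_j = (x_j + ε [F, x_j] + (ε²/2) [N f₁, [N f₁, x_j]]) E`.
-/

open PowerSeries

noncomputable section

/-- Exponential of a formal power series with coefficients in a (possibly noncommutative)
ℚ-algebra; intended for series with zero constant term. -/
def psExp {B : Type*} [Ring B] [Algebra ℚ B] (a : PowerSeries B) : PowerSeries B :=
  PowerSeries.mk fun m =>
    ∑ r ∈ Finset.range (m + 1), (r.factorial : ℚ)⁻¹ • (PowerSeries.coeff m (a ^ r))

/-- Coefficientwise extension of a map `R → S` to formal power series. -/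
def liftFun {R S : Type*} [Semiring R] [Semiring S] (f : R → S) (g : PowerSeries R) :
    PowerSeries S :=
  PowerSeries.mk fun m => f (PowerSeries.coeff m g)

/-- The normal-ordering property of a map `N : k[x_1,…,x_n,p_1,…,p_n] → A_n(k)`. -/
def IsNormalOrdering {k : Type*} [Field k] {n : ℕ} {B : Type*} [Ring B] [Algebra k B]
    (x p : Fin n → B) (N : MvPolynomial (Fin n ⊕ Fin n) k →ₗ[k] B) : Prop :=
  ∀ d : (Fin n ⊕ Fin n) →₀ ℕ,
    N (MvPolynomial.monomial d 1) =
      ((List.finRange n).map fun i => x i ^ d (Sum.inl i)).prod *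
        ((List.finRange n).map fun i => p i ^ d (Sum.inr i)).prod

/-- `A ≡ 𝟙 (mod h)`, i.e. membership of `A` in `𝒜_n(k)`. -/
def IsOneModH {k : Type*} [CommRing k] {n : ℕ}
    (A : Matrix (Fin n) (Fin n) (PowerSeries k)) : Prop :=
  ∀ i j, PowerSeries.constantCoeff (A i j) = if i = j then 1 else 0

/-- `φ(A) := N(exp(Σ_{i,j} x_i (A − 𝟙)_{ij} p_j))`. -/
def phiMat {k : Type*} [Field k] [CharZero k] {n : ℕ} {B : Type*} [Ring B] [Algebra k B]
    (N : MvPolynomial (Fin n ⊕ Fin n) k →ₗ[k] B)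
    (A : Matrix (Fin n) (Fin n) (PowerSeries k)) : PowerSeries B :=
  liftFun N (psExp (∑ i : Fin n, ∑ j : Fin n,
    PowerSeries.C (R := MvPolynomial (Fin n ⊕ Fin n) k)
        (MvPolynomial.X (Sum.inl i) * MvPolynomial.X (Sum.inr j)) *
      PowerSeries.map (MvPolynomial.C) ((A - 1) i j)))

/-- Coefficientwise extension of the partial derivative `∂/∂p_j` to
`k[x_1,…,x_n,p_1,…,p_n][[h]]`. -/
def pdLift {k : Type*} [Field k] {n : ℕ} (j : Fin n)
    (f : PowerSeries (MvPolynomial (Fin n ⊕ Fin n) k)) :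
    PowerSeries (MvPolynomial (Fin n ⊕ Fin n) k) :=
  PowerSeries.mk fun m =>
    MvPolynomial.pderiv (Sum.inr j) (PowerSeries.coeff (R := MvPolynomial (Fin n ⊕ Fin n) k) m f)

namespace List

variable {ι M : Type*} [DecidableEq ι]

theorem prod_map_update_mul_left [Monoid M] {l : List ι} (hl : l.Nodup) {i : ι} (hi : i ∈ l)
    (f : ι → M) {a : M} (ha : ∀ j ∈ l, j ≠ i → Commute a (f j)) (v : M) :
    (l.map (Function.update f i (a * v))).prod = a * (l.map (Function.update f i v)).prod := by
  induction l with
  | nil => simp at hi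
  | cons j t ih =>
    obtain ⟨hjt, ht⟩ := List.nodup_cons.mp hl
    by_cases hji : j = i
    · subst hji
      have hrest : ∀ w : M, t.map (Function.update f j w) = t.map f := fun w =>
        List.map_congr_left fun l hl => Function.update_of_ne (ne_of_mem_of_not_mem hl hjt) _ _
      simp only [List.map_cons, List.prod_cons, Function.update_self, hrest, mul_assoc]
    · have hit : i ∈ t := (List.mem_cons.mp hi).resolve_left (Ne.symm hji)
      simp only [List.map_cons, List.prod_cons, Function.update_of_ne hji,
        ih ht hit fun l hl => ha l (List.mem_cons_of_mem j hl)]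
      exact ((ha j List.mem_cons_self hji).left_comm _).symm

theorem prod_map_mul_eq_mul_prod_add [Ring M] {l : List ι} (hl : l.Nodup) {i : ι} (hi : i ∈ l)
    {f : ι → M} {y c : M} (hy : ∀ j ∈ l, j ≠ i → Commute (f j) y) (hc : f i * y = y * f i + c) :
    (l.map f).prod * y = y * (l.map f).prod + (l.map (Function.update f i c)).prod := by
  induction l with
  | nil => simp at hi
  | cons j t ih =>
    obtain ⟨hjt, ht⟩ := List.nodup_cons.mp hl
    by_cases hji : j = i
    · subst hji
      have hne : ∀ l ∈ t, l ≠ j := fun l hl => ne_of_mem_of_not_mem hl hjt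
      have hrest : t.map (Function.update f j c) = t.map f :=
        List.map_congr_left fun l hl => Function.update_of_ne (hne l hl) _ _
      have htail : Commute (t.map f).prod y := Commute.list_prod_left _ _ fun z hz => by
        obtain ⟨l, hl, rfl⟩ := List.mem_map.mp hz
        exact hy l (List.mem_cons_of_mem j hl) (hne l hl)
      simp only [List.map_cons, List.prod_cons, Function.update_self, hrest]
      rw [mul_assoc, htail.eq, ← mul_assoc, hc, add_mul, mul_assoc]
    · have hit : i ∈ t := (List.mem_cons.mp hi).resolve_left (Ne.symm hji)
      simp only [List.map_cons, List.prod_cons, Function.update_of_ne hji]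
      rw [mul_assoc, ih ht hit fun l hl => hy l (List.mem_cons_of_mem j hl), mul_add,
        ← mul_assoc, (hy j List.mem_cons_self hji).eq, mul_assoc]

end List

theorem pow_mul_eq_mul_pow_add {R : Type*} [Ring R] {a b : R} (h : a * b = b * a + 1) (m : ℕ) :
    a ^ m * b = b * a ^ m + m • a ^ (m - 1) := by
  induction m with
  | zero => simp
  | succ m ih =>
    rw [pow_succ', mul_assoc, ih, mul_add, ← mul_assoc, h, add_mul, one_mul, mul_smul_comm,
      mul_assoc, ← pow_succ', add_assoc, succ_nsmul']
    rcases m with _ | m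
    · simp
    · simp only [← pow_succ', Nat.add_sub_cancel]

namespace IsNormalOrdering

open MvPolynomial

variable {k : Type*} [Field k] {n : ℕ} {B : Type*} [Ring B] [Algebra k B] {x p : Fin n → B}
  {N : MvPolynomial (Fin n ⊕ Fin n) k →ₗ[k] B}

theorem map_monomial (hN : IsNormalOrdering x p N) (d : (Fin n ⊕ Fin n) →₀ ℕ) (a : k) :
    N (monomial d a) = a • (((List.finRange n).map fun i => x i ^ d (Sum.inl i)).prod *
      ((List.finRange n).map fun i => p i ^ d (Sum.inr i)).prod) := by
  rw [← hN d, ← map_smul, smul_monomial, smul_eq_mul, mul_one]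

theorem map_one (hN : IsNormalOrdering x p N) : N 1 = 1 := by
  simpa using hN 0

theorem map_X_inl_mul (hN : IsNormalOrdering x p N) (hxx : ∀ i j, x i * x j = x j * x i)
    (i : Fin n) (q : MvPolynomial (Fin n ⊕ Fin n) k) :
    N (X (Sum.inl i) * q) = x i * N q := by
  induction q using MvPolynomial.induction_on' with
  | add f g hf hg => rw [mul_add, map_add, map_add, hf, hg, mul_add]
  | monomial d a =>
    have hx : (fun l => x l ^ (Finsupp.single (Sum.inl i) 1 + d : _ →₀ ℕ) (Sum.inl l)) =
        Function.update (fun l => x l ^ d (Sum.inl l)) i (x i * x i ^ d (Sum.inl i)) := by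
      funext l
      by_cases hl : l = i
      · subst hl; simp [pow_add]
      · simp [hl]
    rw [← pow_one (X (Sum.inl i)), ← monomial_single_add, map_monomial hN, map_monomial hN, hx,
      List.prod_map_update_mul_left (List.nodup_finRange n) (List.mem_finRange i) _
        (fun l _ _ => Commute.pow_right (hxx i l) _), Function.update_eq_self]
    simp only [Finsupp.add_apply, Finsupp.single_apply, reduceCtorEq, if_false, zero_add,
      mul_smul_comm, mul_assoc]

theorem map_mul_eq_add_map_pderiv (hN : IsNormalOrdering x p N) (hxx : ∀ i j, x i * x j = x j * x i)
    (hpx : ∀ i j, p i * x j - x j * p i = if i = j then (1 : B) else 0)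
    (j : Fin n) (q : MvPolynomial (Fin n ⊕ Fin n) k) :
    N q * x j = x j * N q + N (pderiv (Sum.inr j) q) := by
  induction q using MvPolynomial.induction_on' with
  | add f g hf hg => rw [map_add, map_add, map_add, add_mul, hf, hg, mul_add]; abel
  | monomial d a =>
    set m := d (Sum.inr j)
    set P : Fin n → B := fun l => p l ^ d (Sum.inr l)
    have hjj : p j * x j = x j * p j + 1 := by
      simpa [sub_eq_iff_eq_add'] using hpx j j
    have hP : (fun l => p l ^ (d - Finsupp.single (Sum.inr j) 1 : _ →₀ ℕ) (Sum.inr l)) =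
        Function.update P j (p j ^ (m - 1)) := by
      funext l
      by_cases hl : l = j
      · subst hl; simp [P, m]
      · simp [P, hl]
    have hPx : (List.map P (List.finRange n)).prod * x j =
        x j * (List.map P (List.finRange n)).prod +
          (m : k) • (List.map (Function.update P j (p j ^ (m - 1))) (List.finRange n)).prod := by
      rw [List.prod_map_mul_eq_mul_prod_add (f := P) (List.nodup_finRange n) (List.mem_finRange j)
        (fun l _ hl => Commute.pow_left (sub_eq_zero.mp (by simpa [hl] using hpx l j)) _)
        (pow_mul_eq_mul_pow_add hjj m), ← Nat.cast_smul_eq_nsmul k, Algebra.smul_def,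
        Algebra.smul_def,
        List.prod_map_update_mul_left (List.nodup_finRange n) (List.mem_finRange j) _
          (fun l _ _ => Algebra.commutes _ _)]
    have hX : Commute (((List.finRange n).map fun i => x i ^ d (Sum.inl i)).prod) (x j) :=
      Commute.list_prod_left _ _ fun z hz => by
        obtain ⟨l, -, rfl⟩ := List.mem_map.mp hz
        exact Commute.pow_left (hxx l j) _
    rw [pderiv_monomial, map_monomial hN, map_monomial hN, hP, mul_smul_comm, smul_mul_assoc,
      mul_assoc, hPx, mul_add, ← mul_assoc, hX.eq, mul_assoc, smul_add, mul_smul_comm, smul_smul]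
    simp only [Finsupp.tsub_apply, Finsupp.single_apply, reduceCtorEq, if_false, tsub_zero]
    rfl

end IsNormalOrdering

namespace PowerSeries

theorem coeff_pow_eq_zero_of_lt {A : Type*} [CommRing A] {M : A⟦X⟧} (hM : constantCoeff M = 0)
    {m r : ℕ} (h : m < r) : coeff m (M ^ r) = 0 :=
  X_pow_dvd_iff.mp (pow_dvd_pow_of_dvd (X_dvd_iff.mpr hM) r) m h

theorem coeff_psExp_eq_coeff_sum {A : Type*} [CommRing A] [Algebra ℚ A] {M : A⟦X⟧}
    (hM : constantCoeff M = 0) {m K : ℕ} (h : m < K) :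
    coeff m (psExp M) = coeff m (∑ r ∈ Finset.range K, (r.factorial : ℚ)⁻¹ • M ^ r) := by
  simp only [psExp, coeff_mk, map_sum, coeff_smul]
  refine Finset.sum_subset (Finset.range_subset_range.mpr h) fun r _ hr => ?_
  rw [Finset.mem_range, not_lt] at hr
  rw [coeff_pow_eq_zero_of_lt hM hr, smul_zero]

theorem C_mem_center {R : Type*} [Ring R] {r : R} (hr : r ∈ Subring.center R) :
    C r ∈ Subring.center R⟦X⟧ :=
  Subring.mem_center_iff.mpr fun g => by
    ext m
    rw [coeff_mul_C, coeff_C_mul, Subring.mem_center_iff.mp hr]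

end PowerSeries

namespace Derivation

variable {R A : Type*} [CommRing R] [CommRing A] [Algebra R A]

def mapPowerSeries (d : Derivation R A A) : Derivation R A⟦X⟧ A⟦X⟧ :=
  Derivation.mk'
    { toFun := fun f => PowerSeries.mk fun m => d (coeff m f)
      map_add' := fun f g => by ext m; simp
      map_smul' := fun r f => by ext m; simp }
    fun f g => by
      ext m
      simp only [LinearMap.coe_mk, AddHom.coe_mk, smul_eq_mul, mul_comm g, map_add, coeff_mul,
        coeff_mk, map_sum, Derivation.leibniz, ← Finset.sum_add_distrib]
      exact Finset.sum_congr rfl fun _ _ => by rw [mul_comm (coeff _ g)]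

theorem coeff_mapPowerSeries (d : Derivation R A A) (f : A⟦X⟧) (m : ℕ) :
    coeff m (d.mapPowerSeries f) = d (coeff m f) := by
  simp [mapPowerSeries]

theorem mapPowerSeries_C (d : Derivation R A A) (a : A) : d.mapPowerSeries (C a) = C (d a) := by
  ext m
  simp [coeff_mapPowerSeries, coeff_C, apply_ite d]

theorem mapPowerSeries_map_algebraMap (d : Derivation R A A) (a : R⟦X⟧) :
    d.mapPowerSeries (map (algebraMap R A) a) = 0 := by
  ext m
  simp [coeff_mapPowerSeries]

variable [Algebra ℚ A] (d : Derivation R A A)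

theorem mapPowerSeries_sum_exp (M : A⟦X⟧) (K : ℕ) :
    d.mapPowerSeries (∑ r ∈ Finset.range (K + 1), (r.factorial : ℚ)⁻¹ • M ^ r) =
      d.mapPowerSeries M * ∑ r ∈ Finset.range K, (r.factorial : ℚ)⁻¹ • M ^ r := by
  rw [map_sum, Finset.sum_range_succ', Finset.mul_sum, pow_zero, map_rat_smul,
    Derivation.map_one_eq_zero, smul_zero, add_zero]
  refine Finset.sum_congr rfl fun s _ => ?_
  rw [map_rat_smul, leibniz_pow, Nat.add_sub_cancel, smul_eq_mul, ← Nat.cast_smul_eq_nsmul ℚ,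
    smul_smul, mul_smul_comm, mul_comm (M ^ s)]
  congr 1
  rw [Nat.factorial_succ]
  push_cast
  field_simp

-- Coefficient `m` of `psExp M` is that of a finite truncation, where Leibniz applies termwise.
theorem mapPowerSeries_psExp {M : A⟦X⟧} (hM : constantCoeff M = 0) :
    d.mapPowerSeries (psExp M) = d.mapPowerSeries M * psExp M := by
  ext m
  rw [coeff_mapPowerSeries, coeff_psExp_eq_coeff_sum hM (Nat.lt_succ_of_lt (Nat.lt_succ_self m)),
    ← coeff_mapPowerSeries, mapPowerSeries_sum_exp, coeff_mul, coeff_mul]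
  refine Finset.sum_congr rfl fun q hq => ?_
  rw [coeff_psExp_eq_coeff_sum hM (Finset.Nat.antidiagonal.snd_lt hq)]

end Derivation

section liftFun

variable {R S : Type*} [Semiring R] [Semiring S]

theorem coeff_liftFun (f : R → S) (g : R⟦X⟧) (m : ℕ) : coeff m (liftFun f g) = f (coeff m g) :=
  coeff_mk _ _

theorem liftFun_sum {F : Type*} [FunLike F R S] [AddMonoidHomClass F R S] (f : F) {ι : Type*}
    (s : Finset ι) (g : ι → R⟦X⟧) : liftFun f (∑ i ∈ s, g i) = ∑ i ∈ s, liftFun f (g i) := by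
  ext m
  simp [coeff_liftFun, map_sum]

theorem liftFun_C_mul {f : R → S} {a : R} {b : S} (h : ∀ r, f (a * r) = b * f r) (g : R⟦X⟧) :
    liftFun f (C a * g) = C b * liftFun f g := by
  ext m
  simp [coeff_liftFun, h]

theorem liftFun_mul_C {f : R → S} {δ : R → R} {y : S} (h : ∀ r, f r * y = y * f r + f (δ r))
    (g : R⟦X⟧) :
    liftFun f g * C y = C y * liftFun f g + liftFun f (PowerSeries.mk fun m => δ (coeff m g)) := by
  ext m
  simp [coeff_liftFun, h]

theorem liftFun_map_mul {k : Type*} [CommSemiring k] [Algebra k R] [Algebra k S] (f : R →ₗ[k] S)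
    (a : k⟦X⟧) (g : R⟦X⟧) :
    liftFun f (map (algebraMap k R) a * g) = map (algebraMap k S) a * liftFun f g := by
  ext m
  simp [coeff_liftFun, coeff_mul, map_sum, ← Algebra.smul_def]

end liftFun

section phiMat

variable {k : Type*} [Field k] {n : ℕ} {B : Type*} [Ring B] [Algebra k B]
  {x p : Fin n → B} {N : MvPolynomial (Fin n ⊕ Fin n) k →ₗ[k] B}

def phiExponent (A : Matrix (Fin n) (Fin n) k⟦X⟧) : (MvPolynomial (Fin n ⊕ Fin n) k)⟦X⟧ :=
  ∑ i : Fin n, ∑ j : Fin n,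
    C (MvPolynomial.X (Sum.inl i) * MvPolynomial.X (Sum.inr j)) * map MvPolynomial.C ((A - 1) i j)

theorem phiMat_eq [CharZero k] (A : Matrix (Fin n) (Fin n) k⟦X⟧) :
    phiMat N A = liftFun N (psExp (phiExponent A)) :=
  rfl

theorem isUnit_phiMat [CharZero k] (hN : IsNormalOrdering x p N)
    (A : Matrix (Fin n) (Fin n) k⟦X⟧) : IsUnit (phiMat N A) := by
  refine isUnit_iff_constantCoeff.mpr ?_
  rw [← coeff_zero_eq_constantCoeff_apply, phiMat_eq, coeff_liftFun]
  simp [psExp, hN.map_one]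

theorem constantCoeff_phiExponent {A : Matrix (Fin n) (Fin n) k⟦X⟧} (hA : IsOneModH A) :
    constantCoeff (phiExponent A) = 0 := by
  have h : ∀ i j, constantCoeff ((A - 1) i j) = 0 := fun i j => by
    simp [Matrix.one_apply, hA i j]
  rw [phiExponent, map_sum]
  refine Finset.sum_eq_zero fun i _ => ?_
  rw [map_sum]
  refine Finset.sum_eq_zero fun j _ => ?_
  rw [map_mul, ← coeff_zero_eq_constantCoeff_apply (map _ _), coeff_map,
    coeff_zero_eq_constantCoeff_apply, h, map_zero, mul_zero]

theorem pderiv_phiExponent (A : Matrix (Fin n) (Fin n) k⟦X⟧) (j : Fin n) :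
    (MvPolynomial.pderiv (Sum.inr j)).mapPowerSeries (phiExponent A) =
      ∑ i : Fin n, C (MvPolynomial.X (Sum.inl i)) * map MvPolynomial.C ((A - 1) i j) := by
  simp only [phiExponent, map_sum, Derivation.leibniz, ← MvPolynomial.algebraMap_eq,
    Derivation.mapPowerSeries_map_algebraMap, Derivation.mapPowerSeries_C, MvPolynomial.pderiv_X,
    Pi.single_apply, Sum.inr.injEq, reduceCtorEq, if_false, mul_ite, mul_one, mul_zero, add_zero,
    zero_add, smul_eq_mul, apply_ite C, map_zero, Finset.sum_ite_eq', Finset.mem_univ, if_true]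
  exact Finset.sum_congr rfl fun i _ => mul_comm _ _

theorem phiMat_mul_C [CharZero k] (hN : IsNormalOrdering x p N) (hxx : ∀ i j, x i * x j = x j * x i)
    (hpx : ∀ i j, p i * x j - x j * p i = if i = j then (1 : B) else 0)
    {A : Matrix (Fin n) (Fin n) k⟦X⟧} (hA : IsOneModH A) (j : Fin n) :
    phiMat N A * C (x j) = (∑ i, C (x i) * map (algebraMap k B) (A i j)) * phiMat N A := by
  rw [phiMat_eq, liftFun_mul_C (hN.map_mul_eq_add_map_pderiv hxx hpx j)]
  change C (x j) * _ + liftFun N ((MvPolynomial.pderiv (Sum.inr j)).mapPowerSeries (psExp _)) = _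
  rw [Derivation.mapPowerSeries_psExp _ (constantCoeff_phiExponent hA), pderiv_phiExponent,
    Finset.sum_mul, liftFun_sum]
  simp only [mul_assoc, liftFun_C_mul (hN.map_X_inl_mul hxx _), ← MvPolynomial.algebraMap_eq,
    liftFun_map_mul]
  have hsum : ∑ i, C (x i) * map (algebraMap k B) (A i j) =
      C (x j) + ∑ i, C (x i) * map (algebraMap k B) ((A - 1) i j) := by
    simp [Matrix.one_apply, mul_sub, Finset.sum_sub_distrib]
  rw [hsum, add_mul, Finset.sum_mul]
  simp only [mul_assoc]

end phiMat

section Nilpotent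

variable {R S : Type*} [CommRing R] [Ring S] [Algebra R S] {c : R}

theorem isUnit_one_add_smul_add_smul_sq (hc : c ^ 3 = 0) (h : R) (a b : S) :
    IsUnit (1 + c • (a + c • b) + (h * c ^ 2) • a ^ 2) := by
  have hfactor : 1 + c • (a + c • b) + (h * c ^ 2) • a ^ 2 =
      1 + c • (a + c • b + (h * c) • a ^ 2) := by
    module
  rw [hfactor]
  exact IsNilpotent.isUnit_one_add ⟨3, by rw [smul_pow, hc, zero_smul]⟩

theorem one_add_smul_add_smul_sq_mul (hc : c ^ 3 = 0) {h : R} (hh : h + h = 1) {a b y a' b' : S}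
    (ha : a * y = y * a + a') (hb : b * y = y * b + b') :
    (1 + c • (a + c • b) + (h * c ^ 2) • a ^ 2) * y =
      (y + c • (a' + c • b') + (h * c ^ 2) • (a * a' - a' * a)) *
        (1 + c • (a + c • b) + (h * c ^ 2) • a ^ 2) := by
  have haa : a ^ 2 * y = y * a ^ 2 + (a * a' + a' * a) := by
    rw [sq, mul_assoc, ha, mul_add, ← mul_assoc, ha]; noncomm_ring
  simp only [add_mul, mul_add, smul_mul_assoc, mul_smul_comm, one_mul, mul_one, ha, hb, haa,
    smul_add, sub_mul, smul_sub, smul_smul]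
  match_scalars <;> grind

end Nilpotent

theorem statement6_general {k : Type*} [Field k] [CharZero k]
    {B : Type*} [Ring B] [Algebra k B]
    (x p : Fin 2 → B)
    (hxx : ∀ i j, x i * x j = x j * x i)
    (hpx : ∀ i j, p i * x j - x j * p i = if i = j then (1 : B) else 0)
    (ε : B) (hεcen : ∀ b : B, ε * b = b * ε) (hε3 : ε ^ 3 = 0)
    (N : MvPolynomial (Fin 2 ⊕ Fin 2) k →ₗ[k] B) (hN : IsNormalOrdering x p N)
    (A : Matrix (Fin 2) (Fin 2) (PowerSeries k)) (hA : IsOneModH A)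
    (f₁ f₂ : PowerSeries (MvPolynomial (Fin 2 ⊕ Fin 2) k)) :
    let Ce : PowerSeries B := PowerSeries.C (R := B) ε
    let half : PowerSeries B := PowerSeries.C (R := B) (algebraMap k B (2⁻¹ : k))
    let φA : PowerSeries B := phiMat N A
    let R : PowerSeries B :=
      φA * (1 + Ce * (liftFun N f₁ + Ce * liftFun N f₂) +
        half * Ce ^ 2 * (liftFun N f₁) ^ 2)
    ∃ Rinv φAinv : PowerSeries B,
      R * Rinv = 1 ∧ Rinv * R = 1 ∧ φA * φAinv = 1 ∧ φAinv * φA = 1 ∧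
      ∀ j : Fin 2,
        R * PowerSeries.C (R := B) (x j) * Rinv =
          (∑ i : Fin 2, PowerSeries.C (R := B) (x i) * PowerSeries.map (algebraMap k B) (A i j)) +
          Ce * (φA * (liftFun N (pdLift j f₁) + Ce * liftFun N (pdLift j f₂)) * φAinv) +
          half * Ce ^ 2 *
            (φA * (liftFun N f₁ * liftFun N (pdLift j f₁) -
                liftFun N (pdLift j f₁) * liftFun N f₁) * φAinv) := by
  intro Ce half φA R
  -- `ε` and `1/2` are central, so they act as scalars of the commutative ring `center B⟦X⟧`.
  let c : Subring.center B⟦X⟧ :=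
    ⟨Ce, C_mem_center (Subring.mem_center_iff.mpr fun b => (hεcen b).symm)⟩
  let h : Subring.center B⟦X⟧ :=
    ⟨half, C_mem_center (Subring.mem_center_iff.mpr fun b => (Algebra.commutes _ b).symm)⟩
  have hc : c ^ 3 = 0 := Subtype.ext (by simp [c, Ce, ← map_pow, hε3])
  have hh : h + h = 1 := Subtype.ext (by
    simp only [h, half, Subring.coe_add, ← map_add, Subring.coe_one]
    norm_num)
  obtain ⟨uφ, huφ⟩ : IsUnit φA := isUnit_phiMat hN A
  obtain ⟨uE, huE⟩ := isUnit_one_add_smul_add_smul_sq hc h (liftFun N f₁) (liftFun N f₂)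
  have hR : R = ↑(uφ * uE) := by rw [Units.val_mul, huφ, huE]; rfl
  refine ⟨↑(uφ * uE)⁻¹, ↑uφ⁻¹, by rw [hR, Units.mul_inv], by rw [hR, Units.inv_mul],
    by rw [← huφ, Units.mul_inv], by rw [← huφ, Units.inv_mul], fun j => ?_⟩
  have hφinv : ↑uφ⁻¹ * φA = 1 := by rw [← huφ, Units.inv_mul]
  have hφ : φA * C (x j) = (∑ i, C (x i) * map (algebraMap k B) (A i j)) * φA :=
    phiMat_mul_C hN hxx hpx hA j
  have hx : ∀ f, liftFun N f * C (x j) = C (x j) * liftFun N f + liftFun N (pdLift j f) :=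
    liftFun_mul_C (hN.map_mul_eq_add_map_pderiv hxx hpx j)
  have hc_smul : ∀ v, Ce * v = c • v := fun _ => rfl
  have hh_smul : ∀ v, half * Ce ^ 2 * v = (h * c ^ 2) • v := fun _ => rfl
  rw [hR, Units.mul_inv_eq_iff_eq_mul, Units.val_mul, huφ, huE, mul_assoc,
    one_add_smul_add_smul_sq_mul hc hh (hx f₁) (hx f₂), ← mul_assoc, ← mul_assoc, hc_smul,
    hc_smul, hh_smul]
  congr 1
  simp only [mul_add, add_mul, mul_smul_comm, smul_mul_assoc, mul_assoc, hφinv, mul_one,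
    hφ]

/-- over `k[ε]/(ε³)` (encoded by a central element `ε` with `ε³ = 0`),
with `R := φ(A)·exp(ε·N(f₁ + ε f₂))` where the exponential is the finite sum
`1 + ε·N(f₁+εf₂) + (ε²/2)·N(f₁)²`, the element `R` is invertible and
`R·x_j·R⁻¹ = Σ_i x_i A_{ij} + ε·φ(A)·N(∂_{p_j}f₁ + ε ∂_{p_j}f₂)·φ(A)⁻¹
  + (ε²/2)·φ(A)·[N(f₁), N(∂_{p_j}f₁)]·φ(A)⁻¹` (equality modulo `ε³` is exact here
since `ε³ = 0`). -/
theorem statement6 {k : Type*} [Field k] [CharZero k]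
    {B : Type*} [Ring B] [Algebra k B]
    (x p : Fin 2 → B)
    (hxx : ∀ i j, x i * x j = x j * x i)
    (hpp : ∀ i j, p i * p j = p j * p i)
    (hpx : ∀ i j, p i * x j - x j * p i = if i = j then (1 : B) else 0)
    (ε : B) (hεcen : ∀ b : B, ε * b = b * ε) (hε3 : ε ^ 3 = 0)
    (N : MvPolynomial (Fin 2 ⊕ Fin 2) k →ₗ[k] B) (hN : IsNormalOrdering x p N)
    (A : Matrix (Fin 2) (Fin 2) (PowerSeries k)) (hA : IsOneModH A)
    (f₁ f₂ : PowerSeries (MvPolynomial (Fin 2 ⊕ Fin 2) k)) :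
    let Ce : PowerSeries B := PowerSeries.C (R := B) ε
    let half : PowerSeries B := PowerSeries.C (R := B) (algebraMap k B (2⁻¹ : k))
    let φA : PowerSeries B := phiMat N A
    let R : PowerSeries B :=
      φA * (1 + Ce * (liftFun N f₁ + Ce * liftFun N f₂) +
        half * Ce ^ 2 * (liftFun N f₁) ^ 2)
    ∃ Rinv φAinv : PowerSeries B,
      R * Rinv = 1 ∧ Rinv * R = 1 ∧ φA * φAinv = 1 ∧ φAinv * φA = 1 ∧
      ∀ j : Fin 2,
        R * PowerSeries.C (R := B) (x j) * Rinv =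
          (∑ i : Fin 2, PowerSeries.C (R := B) (x i) * PowerSeries.map (algebraMap k B) (A i j)) +
          Ce * (φA * (liftFun N (pdLift j f₁) + Ce * liftFun N (pdLift j f₂)) * φAinv) +
          half * Ce ^ 2 *
            (φA * (liftFun N f₁ * liftFun N (pdLift j f₁) -
                liftFun N (pdLift j f₁) * liftFun N f₁) * φAinv) :=
  statement6_general x p hxx hpx ε hεcen hε3 N hN A hA f₁ f₂
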